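/- arXiv:0912.5529 — 2 statements merged into one kernel-verified Lean document; each statement's English description precedes it below -/
import Mathlib

section
/- Let V = Σ_{j=1}^J P_j² where each P_j lies in an N-dimensional subspace of L²(Ω) spanned by an orthonormal system φ₁,…,φ_N that is uniformly bounded by M on Ω, a finite-measure subset of ℝ^n. Then ∫_Ω V² dx ≤ N⁴ M² (∫_Ω V dx)². -/
open MeasureTheory

/-- Let `V = Σ_{j=1}^J P_j²` where each `P_j = Σ_k a_{jk} φ_k` lies in the span
of an orthonormal system `φ₁,…,φ_N ⊆ L²(Ω)` uniformly bounded by `M` on the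
finite-measure set `Ω ⊆ ℝ^n`. Then `∫_Ω V² ≤ N⁴ M² (∫_Ω V)²`. -/
theorem integral_V_sq_le
    (n N J : ℕ) (Ω : Set (Fin n → ℝ)) (hΩmeas : MeasurableSet Ω)
    (hΩfin : volume Ω < ⊤)
    (φ : Fin N → (Fin n → ℝ) → ℝ) (hφmeas : ∀ k, Measurable (φ k))
    (M : ℝ) (hM : 0 < M)
    (hbound : ∀ k, ∀ x ∈ Ω, |φ k x| ≤ M)
    (horth : ∀ k j, (∫ x in Ω, φ k x * φ j x) = if k = j then 1 else 0)
    (a : Fin J → Fin N → ℝ)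
    (V : (Fin n → ℝ) → ℝ)
    (hV : ∀ x, V x = ∑ j, (∑ k, a j k * φ k x) ^ 2) :
    (∫ x in Ω, (V x) ^ 2) ≤ (N : ℝ) ^ 4 * M ^ 2 * (∫ x in Ω, V x) ^ 2 := by
  haveI : IsFiniteMeasure (volume.restrict Ω) :=
    ⟨by rwa [Measure.restrict_apply_univ]⟩
  set S := ∑ j, ∑ k, (a j k) ^ 2 with hS
  have hS0 : 0 ≤ S :=
    Finset.sum_nonneg fun j _ => Finset.sum_nonneg fun k _ => sq_nonneg _
  -- integrability of products of φ's
  have hint : ∀ k l : Fin N, IntegrableOn (fun x => φ k x * φ l x) Ω := by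
    intro k l
    refine (integrable_const (M * M)).mono'
      ((hφmeas k).mul (hφmeas l)).aestronglyMeasurable ?_
    filter_upwards [ae_restrict_mem hΩmeas] with x hx
    rw [Real.norm_eq_abs, abs_mul]
    exact mul_le_mul (hbound k x hx) (hbound l x hx) (abs_nonneg _) hM.le
  -- expand V
  have hVexp : ∀ x, V x = ∑ j, ∑ k, ∑ l, (a j k * a j l) * (φ k x * φ l x) := by
    intro x
    rw [hV]
    refine Finset.sum_congr rfl fun j _ => ?_
    rw [sq, Finset.sum_mul_sum]
    exact Finset.sum_congr rfl fun k _ => Finset.sum_congr rfl fun l _ => by ring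
  -- integral of V equals S
  have hVS : (∫ x in Ω, V x) = S := by
    have h1 : (∫ x in Ω, V x)
        = ∑ j, ∑ k, ∑ l, (a j k * a j l) * ∫ x in Ω, φ k x * φ l x := by
      simp_rw [hVexp]
      rw [integral_finset_sum _ fun j _ =>
        integrable_finset_sum _ fun k _ =>
          integrable_finset_sum _ fun l _ => (hint k l).const_mul _]
      refine Finset.sum_congr rfl fun j _ => ?_
      rw [integral_finset_sum _ fun k _ =>
        integrable_finset_sum _ fun l _ => (hint k l).const_mul _]
      refine Finset.sum_congr rfl fun k _ => ?_
      rw [integral_finset_sum _ fun l _ => (hint k l).const_mul _]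
      exact Finset.sum_congr rfl fun l _ => integral_const_mul _ _
    rw [h1, hS]
    refine Finset.sum_congr rfl fun j _ => Finset.sum_congr rfl fun k _ => ?_
    simp_rw [horth, mul_ite, mul_one, mul_zero]
    rw [Finset.sum_ite_eq]
    simp [sq]
  -- pointwise bound on V
  have hVnonneg : ∀ x, 0 ≤ V x := fun x => by
    rw [hV]; exact Finset.sum_nonneg fun j _ => sq_nonneg _
  have hVle : ∀ x ∈ Ω, V x ≤ (N : ℝ) * M ^ 2 * S := by
    intro x hx
    have hφsq : (∑ k, (φ k x) ^ 2) ≤ (N : ℝ) * M ^ 2 := by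
      calc (∑ k, (φ k x) ^ 2) ≤ ∑ _k : Fin N, M ^ 2 :=
            Finset.sum_le_sum fun k _ => by
              have h := abs_le.mp (hbound k x hx)
              exact sq_le_sq' h.1 h.2
        _ = (N : ℝ) * M ^ 2 := by simp [Finset.sum_const, Finset.card_univ]
    rw [hV]
    calc (∑ j, (∑ k, a j k * φ k x) ^ 2)
        ≤ ∑ j, (∑ k, (a j k) ^ 2) * (∑ k, (φ k x) ^ 2) :=
          Finset.sum_le_sum fun j _ => Finset.sum_mul_sq_le_sq_mul_sq _ _ _
      _ ≤ ∑ j, (∑ k, (a j k) ^ 2) * ((N : ℝ) * M ^ 2) :=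
          Finset.sum_le_sum fun j _ =>
            mul_le_mul_of_nonneg_left hφsq
              (Finset.sum_nonneg fun k _ => sq_nonneg _)
      _ = (N : ℝ) * M ^ 2 * S := by rw [← Finset.sum_mul, hS]; ring
  -- measurability of V
  have hVm : Measurable V := by
    have : V = fun x => ∑ j, (∑ k, a j k * φ k x) ^ 2 := funext hV
    rw [this]
    exact Finset.measurable_sum _ fun j _ =>
      (Finset.measurable_sum _ fun k _ => (hφmeas k).const_mul _).pow_const 2
  set C := (N : ℝ) * M ^ 2 * S with hC
  have hC0 : 0 ≤ C := by positivity
  -- integrability of V and V²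
  have hVint : IntegrableOn V Ω := by
    refine (integrable_const C).mono' hVm.aestronglyMeasurable ?_
    filter_upwards [ae_restrict_mem hΩmeas] with x hx
    rw [Real.norm_eq_abs, abs_of_nonneg (hVnonneg x)]
    exact hVle x hx
  have hV2int : IntegrableOn (fun x => (V x) ^ 2) Ω := by
    refine (integrable_const (C ^ 2)).mono'
      (hVm.pow_const 2).aestronglyMeasurable ?_
    filter_upwards [ae_restrict_mem hΩmeas] with x hx
    rw [Real.norm_eq_abs, abs_of_nonneg (sq_nonneg _)]
    exact pow_le_pow_left₀ (hVnonneg x) (hVle x hx) 2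
  have key : (∫ x in Ω, (V x) ^ 2) ≤ C * ∫ x in Ω, V x := by
    rw [← integral_const_mul]
    refine setIntegral_mono_on hV2int (hVint.const_mul C) hΩmeas fun x hx => ?_
    rw [sq]
    exact mul_le_mul_of_nonneg_right (hVle x hx) (hVnonneg x)
  have hN4 : (N : ℝ) ≤ (N : ℝ) ^ 4 := by
    exact_mod_cast Nat.le_self_pow (by norm_num) N
  calc (∫ x in Ω, (V x) ^ 2) ≤ C * ∫ x in Ω, V x := key
    _ = (N : ℝ) * M ^ 2 * S ^ 2 := by rw [hVS, hC]; ring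
    _ ≤ (N : ℝ) ^ 4 * M ^ 2 * (∫ x in Ω, V x) ^ 2 := by
        rw [hVS]
        nlinarith [sq_nonneg S, sq_nonneg M, mul_nonneg (sq_nonneg M) (sq_nonneg S)]
end

section
/- Let P₁,…,P_N be linearly independent polynomials on ℝ^n, let G ⊆ ℝ^n be a bounded open set, and let c > 0. Then inf over pairs (u, Ω), with u ∈ ℝ^N a unit vector and Ω ⊆ G measurable with vol(Ω) ≥ c, of ∫_Ω (Σ_k u_k P_k(x))² dx is strictly positive. -/
/-!
For a unit vector `u` the polynomial `∑ uₖ Pₖ` is nonzero by linear independence, so its zero set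
is Lebesgue-null (induction on the number of variables: by Fubini over the first coordinate, for
almost every value of the others the leading coefficient does not vanish and only finitely many
roots remain). Hence `Ḡ ∩ {|∑ uₖ Pₖ| < t}` has measure `< c / 2` for small `t`. The map
`u ↦ ∑ uₖ Pₖ` is continuous uniformly on the compact set `Ḡ`, so compactness of the sphere yields
one `t` that works for all `u`. Every `Ω ⊆ G` of measure `≥ c` then keeps measure `≥ c / 2` where
`(∑ uₖ Pₖ)² ≥ t²`, so the integral is at least `t² c / 2`.
-/

open MeasureTheory Filter Topology Set
open scoped ENNReal

namespace MvPolynomial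

theorem volume_setOf_eval_eq_zero :
    ∀ {n : ℕ} {p : MvPolynomial (Fin n) ℝ}, p ≠ 0 → volume {x | eval x p = 0} = 0
  | 0, p, hp => by
    have hcoeff : coeff 0 p ≠ 0 := fun h ↦ hp (by rw [eq_C_of_isEmpty p, h, C_0])
    convert measure_empty (μ := volume)
    ext x
    rw [mem_ofPred_eq, eq_C_of_isEmpty p, eval_C]
    simpa using hcoeff
  | n + 1, p, hp => by
    set q := finSuccEquiv ℝ n p
    have hq : q ≠ 0 := by simpa [q] using hp
    set T : Set (ℝ × (Fin n → ℝ)) := {z | eval (Fin.cons z.1 z.2) p = 0}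
    have hT : MeasurableSet T :=
      ((continuous_eval p).comp (by fun_prop)).measurable (measurableSet_singleton 0)
    have hslice : ∀ᵐ s : Fin n → ℝ, volume ((fun y ↦ (y, s)) ⁻¹' T) = 0 := by
      filter_upwards [measure_eq_zero_iff_ae_notMem.mp (volume_setOf_eval_eq_zero
        (Polynomial.leadingCoeff_ne_zero.mpr hq))] with s hs
      have hmap : q.map (eval s) ≠ 0 := fun h ↦ hs <| by
        simpa [Polynomial.coeff_map] using congrArg (·.coeff q.natDegree) h
      refine measure_mono_null (fun y hy ↦ ?_)
        ((Polynomial.finite_setOfPred_isRoot hmap).measure_zero _)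
      simpa [T, q, eval_eq_eval_mv_eval'] using hy
    have hpres := (volume_preserving_piFinSuccAbove (fun _ : Fin (n + 1) ↦ ℝ) 0).symm
    rw [← hpres.measure_preimage_equiv, Measure.volume_eq_prod]
    convert (Measure.prod_apply_symm hT).trans (by rw [lintegral_congr_ae hslice, lintegral_zero])
    ext z
    simp only [MeasurableEquiv.piFinSuccAbove_symm_apply, Fin.insertNthEquiv_zero]
    rfl

theorem volume_setOf_sum_mul_eval_eq_zero {ι : Type*} [Fintype ι] {n : ℕ}
    {P : ι → MvPolynomial (Fin n) ℝ} (hP : LinearIndependent ℝ P) {u : ι → ℝ} (hu : u ≠ 0) :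
    volume {x | ∑ k, u k * eval x (P k) = 0} = 0 := by
  have hne : ∑ k, u k • P k ≠ 0 := fun h ↦ hu <| by
    ext k; exact Fintype.linearIndependent_iff.mp hP u h k
  simpa [smul_eval] using volume_setOf_eval_eq_zero hne

end MvPolynomial

section

variable {Y : Type*} [MeasurableSpace Y] {μ : Measure Y}

theorem exists_pos_measure_inter_abs_lt_lt {f : Y → ℝ} (hf : Measurable f) {s : Set Y}
    (hs : MeasurableSet s) (hμs : μ s ≠ ∞) (h0 : μ (s ∩ {y | f y = 0}) = 0) {ε : ℝ≥0∞}
    (hε : 0 < ε) : ∃ r > 0, μ (s ∩ {y | |f y| < r}) < ε := by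
  have hlim := tendsto_measure_biInter_gt (μ := μ) (s := fun r : ℝ ↦ s ∩ {y | |f y| < r})
    (a := 0) (fun r _ ↦ (hs.inter (measurableSet_lt hf.abs measurable_const)).nullMeasurableSet)
    (fun _ _ _ hij ↦ inter_subset_inter_right _ fun _ hy ↦ lt_of_lt_of_le hy hij)
    ⟨1, one_pos, ne_top_of_le_ne_top hμs (measure_mono inter_subset_left)⟩
  have hnull : μ (⋂ r > 0, s ∩ {y | |f y| < r}) = 0 := by
    refine measure_mono_null (fun y hy ↦ ?_) h0
    simp only [mem_iInter, mem_inter_iff, mem_ofPred_eq] at hy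
    refine ⟨(hy 1 one_pos).1, ?_⟩
    by_contra hne
    exact lt_irrefl _ (hy _ (abs_pos.mpr hne)).2
  rw [hnull] at hlim
  obtain ⟨r, hμr, hr⟩ := ((hlim.eventually (gt_mem_nhds hε)).and self_mem_nhdsWithin).exists
  exact ⟨r, hr, hμr⟩

theorem sq_mul_le_setIntegral_sq {g : Y → ℝ} (hg : Measurable g) {Ω B : Set Y}
    (hint : IntegrableOn (fun y ↦ g y ^ 2) Ω μ) (hΩ : μ Ω ≠ ∞) {t a : ℝ} (ht : 0 ≤ t)
    (hB : ∀ y ∈ Ω, |g y| < t → y ∈ B) (hμ : ENNReal.ofReal a + μ B ≤ μ Ω) :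
    t ^ 2 * a ≤ ∫ y in Ω, g y ^ 2 ∂μ := by
  set A := {y | t ^ 2 ≤ g y ^ 2}
  have hA : MeasurableSet A := measurableSet_le measurable_const (hg.pow_const 2)
  have hcover : μ Ω ≤ μ (A ∩ Ω) + μ B := by
    refine (measure_mono fun y hy ↦ ?_).trans (measure_union_le _ _)
    by_cases hyA : t ^ 2 ≤ g y ^ 2
    · exact Or.inl ⟨hyA, hy⟩
    · exact Or.inr (hB y hy (by simpa [abs_of_nonneg ht] using sq_lt_sq.mp (not_le.mp hyA)))
  have hBfin : μ B ≠ ∞ := ne_top_of_le_ne_top hΩ (le_add_self.trans hμ)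
  have hlarge : ENNReal.ofReal a ≤ μ (A ∩ Ω) :=
    (ENNReal.add_le_add_iff_right hBfin).mp (hμ.trans hcover)
  calc t ^ 2 * a ≤ t ^ 2 * (μ.restrict Ω).real A := by
        gcongr
        rw [measureReal_def, Measure.restrict_apply hA]
        exact (ENNReal.ofReal_le_iff_le_toReal
          (ne_top_of_le_ne_top hΩ (measure_mono inter_subset_right))).mp hlarge
    _ ≤ ∫ y in Ω, g y ^ 2 ∂μ :=
        mul_meas_ge_le_integral_of_nonneg (ae_of_all _ fun _ ↦ sq_nonneg _) hint _

variable {X : Type*} [TopologicalSpace X] [TopologicalSpace Y] [OpensMeasurableSpace Y]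

theorem IsCompact.exists_pos_forall_measure_inter_abs_lt_lt {F : X → Y → ℝ}
    (hF : Continuous F.uncurry) {K : Set X} (hK : IsCompact K) {s : Set Y} (hs : IsCompact s)
    (hsm : MeasurableSet s) (hμs : μ s ≠ ∞) (h0 : ∀ u ∈ K, μ (s ∩ {y | F u y = 0}) = 0)
    {ε : ℝ≥0∞} (hε : 0 < ε) : ∃ t > 0, ∀ u ∈ K, μ (s ∩ {y | |F u y| < t}) < ε := by
  have hnear : ∀ u ∈ K, ∀ᶠ p : ℝ × X in 𝓝 ((0 : ℝ), u), μ (s ∩ {y | |F p.2 y| < p.1}) < ε := by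
    intro u hu
    obtain ⟨r, hr, hμr⟩ := exists_pos_measure_inter_abs_lt_lt
      (hF.uncurry_left u).measurable hsm hμs (h0 u hu) hε
    obtain ⟨V, hV, hclose⟩ := hs.mem_uniformity_of_prod hF.continuousOn (mem_univ u)
      (Metric.dist_mem_uniformity (half_pos hr))
    rw [nhdsWithin_univ] at hV
    rw [nhds_prod_eq]
    filter_upwards [prod_mem_prod (Iio_mem_nhds (half_pos hr)) hV] with ⟨t, v⟩ ⟨ht, hv⟩
    refine (measure_mono (show s ∩ {y | |F v y| < t} ⊆ s ∩ {y | |F u y| < r}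
      from fun y hy ↦ ⟨hy.1, ?_⟩)).trans_lt hμr
    have hdist : |F v y - F u y| < r / 2 := by simpa [Real.dist_eq] using hclose v hv y hy.1
    have hvy : |F v y| < t := hy.2
    show |F u y| < r
    linarith [abs_sub_abs_le_abs_sub (F u y) (F v y), abs_sub_comm (F u y) (F v y), ht.out]
  obtain ⟨t, hsmall, ht⟩ :=
    ((hK.eventually_forall_of_forall_eventually (x₀ := (0 : ℝ))
      (P := fun t u ↦ μ (s ∩ {y | |F u y| < t}) < ε) hnear).filter_mono nhdsWithin_le_nhds
      |>.and (self_mem_nhdsWithin (s := Ioi 0))).exists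
  exact ⟨t, ht, hsmall⟩

end

theorem isCompact_setOf_sum_sq_eq_one {ι : Type*} [Fintype ι] :
    IsCompact {u : ι → ℝ | ∑ i, u i ^ 2 = 1} := by
  refine Metric.isCompact_of_isClosed_isBounded (isClosed_eq (by fun_prop) continuous_const)
    (Metric.isBounded_closedBall (x := 0) (r := 1) |>.subset fun u hu ↦ ?_)
  rw [mem_closedBall_zero_iff, pi_norm_le_iff_of_nonneg zero_le_one]
  intro i
  rw [Real.norm_eq_abs, ← sq_le_one_iff_abs_le_one, ← hu.out]
  exact Finset.single_le_sum (fun j _ ↦ sq_nonneg (u j)) (Finset.mem_univ i)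

theorem inf_integral_sq_linear_combination_pos_general
    (n N : ℕ) (P : Fin N → MvPolynomial (Fin n) ℝ)
    (hP : LinearIndependent ℝ P)
    (G : Set (Fin n → ℝ))
    (hGbdd : Bornology.IsBounded G)
    (c : ℝ) (hc : 0 < c) :
    ∃ ε > 0, ∀ (u : Fin N → ℝ), (∑ k, (u k) ^ 2 = 1) →
      ∀ (Ω : Set (Fin n → ℝ)), Ω ⊆ G → MeasurableSet Ω →
        ENNReal.ofReal c ≤ volume Ω →
        ε ≤ ∫ x in Ω, (∑ k, u k * MvPolynomial.eval x (P k)) ^ 2 := by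
  set f : (Fin N → ℝ) → (Fin n → ℝ) → ℝ := fun u x ↦ ∑ k, u k * MvPolynomial.eval x (P k)
  have hf : Continuous f.uncurry := by
    have := fun k ↦ MvPolynomial.continuous_eval (P k)
    fun_prop
  have hK := hGbdd.isCompact_closure
  obtain ⟨t, ht, hsmall⟩ :=
    isCompact_setOf_sum_sq_eq_one.exists_pos_forall_measure_inter_abs_lt_lt hf hK
      isClosed_closure.measurableSet hK.measure_lt_top.ne
      (fun u hu ↦ measure_mono_null inter_subset_right
        (MvPolynomial.volume_setOf_sum_mul_eval_eq_zero hP (by rintro rfl; simp at hu)))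
      (ENNReal.ofReal_pos.mpr (half_pos hc))
  refine ⟨t ^ 2 * (c / 2), by positivity, fun u hu Ω hΩG _ hcΩ ↦ ?_⟩
  have hfu := hf.uncurry_left u
  refine sq_mul_le_setIntegral_sq (B := closure G ∩ {x | |f u x| < t}) hfu.measurable
    (((hfu.pow 2).continuousOn.integrableOn_compact hK).mono_set (hΩG.trans subset_closure))
    ((measure_mono hΩG).trans_lt hGbdd.measure_lt_top).ne ht.le
    (fun x hx hxt ↦ ⟨subset_closure (hΩG hx), hxt⟩) ?_
  calc ENNReal.ofReal (c / 2) + volume (closure G ∩ {x | |f u x| < t})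
      ≤ ENNReal.ofReal (c / 2) + ENNReal.ofReal (c / 2) := by gcongr; exact (hsmall u hu).le
    _ = ENNReal.ofReal c := by rw [← ENNReal.ofReal_add (by positivity) (by positivity), add_halves]
    _ ≤ volume Ω := hcΩ

/-- For linearly independent polynomials `P₁,…,P_N` on `ℝ^n`, a bounded open
set `G ⊆ ℝ^n` and `c > 0`, the infimum over unit vectors `u ∈ ℝ^N` and
measurable `Ω ⊆ G` with `vol Ω ≥ c` of `∫_Ω (Σ u_k P_k)² dx` is strictly
positive. -/
theorem inf_integral_sq_linear_combination_pos
    (n N : ℕ) (P : Fin N → MvPolynomial (Fin n) ℝ)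
    (hP : LinearIndependent ℝ P)
    (G : Set (Fin n → ℝ)) (hGopen : IsOpen G)
    (hGbdd : Bornology.IsBounded G)
    (c : ℝ) (hc : 0 < c) :
    ∃ ε > 0, ∀ (u : Fin N → ℝ), (∑ k, (u k) ^ 2 = 1) →
      ∀ (Ω : Set (Fin n → ℝ)), Ω ⊆ G → MeasurableSet Ω →
        ENNReal.ofReal c ≤ volume Ω →
        ε ≤ ∫ x in Ω, (∑ k, u k * MvPolynomial.eval x (P k)) ^ 2 :=
  inf_integral_sq_linear_combination_pos_general n N P hP G hGbdd c hc
end
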